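/- Let β > 0, γ > 0, α ≥ 0, δ ≥ 0 with 0 < α + δ < γ, and let x ≥ 0. Then the annuity value under Gompertz–Makeham mortality satisfies ā_x(α,β,γ,δ) = (1/(α+δ))·(1 − (β e^{γx}/γ)^{(α+δ)/γ} · e^{β e^{γx}/γ} · Γ(1 − (α+δ)/γ) · [1 − G(β e^{γx}/γ; 1 − (α+δ)/γ, 1)]), where Γ denotes the gamma function and G(·;η,1) the gamma distribution function with shape η and scale 1. -/

import Mathlib

open MeasureTheory

/-- Gompertz–Makeham survival function `l(x; α, β, γ) = exp(-αx - (β/γ)(e^{γx} - 1))`. -/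
noncomputable def survival (α β γ x : ℝ) : ℝ :=
  Real.exp (-α * x - β / γ * (Real.exp (γ * x) - 1))

/-- Present value of a continuously paid life-long annuity at age `x`:
`ā_x(α,β,γ,δ) = ∫₀^∞ e^{-δt} l(x+t)/l(x) dt`. -/
noncomputable def annuity (α β γ δ x : ℝ) : ℝ :=
  ∫ t in Set.Ioi (0 : ℝ), Real.exp (-δ * t) * (survival α β γ (x + t) / survival α β γ x)

/-- Gamma distribution function with shape `η` and scale 1:
`G(z; η, 1) = (1/Γ(η)) ∫₀^z y^{η-1} e^{-y} dy`. -/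
noncomputable def gammaCDF' (z η : ℝ) : ℝ :=
  (1 / Real.Gamma η) * ∫ y in (0:ℝ)..z, y ^ (η - 1) * Real.exp (-y)

open Real Set Filter Topology

/-!
With `c = β e^{γx}/γ` and `s = α + δ`, the ratio `l(x+t)/l(x)` factors so that
`ā_x = e^c ∫₀^∞ e^{-st - c e^{γt}} dt`. Integrating the derivative of the integrand over `(0, ∞)`
gives `s ∫₀^∞ e^{-st - c e^{γt}} dt = e^{-c} - cγ ∫₀^∞ e^{(γ-s)t - c e^{γt}} dt`, and the
substitution `y = c e^{γt}` turns the last integral into `(γ c^η)⁻¹ ∫_c^∞ y^{η-1} e^{-y} dy` with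
`η = 1 - s/γ > 0`, i.e. into the upper tail `Γ(η) (1 - G(c; η, 1))`.
-/

lemma survival_add_div_survival (α β γ x t : ℝ) :
    survival α β γ (x + t) / survival α β γ x
      = exp (-α * t - β * exp (γ * x) / γ * (exp (γ * t) - 1)) := by
  rw [survival, survival, ← exp_sub, mul_add γ, exp_add]
  congr 1
  ring

lemma annuity_eq_exp_mul_integral (α β γ δ x : ℝ) :
    annuity α β γ δ x = exp (β * exp (γ * x) / γ)
      * ∫ t in Ioi 0, exp (-(α + δ) * t - β * exp (γ * x) / γ * exp (γ * t)) := by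
  rw [annuity, ← integral_const_mul]
  refine setIntegral_congr_fun measurableSet_Ioi fun t _ => ?_
  rw [survival_add_div_survival, ← exp_add, ← exp_add]
  ring_nf

lemma hasDerivAt_mul_exp_mul (c γ t : ℝ) :
    HasDerivAt (fun t => c * exp (γ * t)) (c * γ * exp (γ * t)) t := by
  simpa [mul_comm, mul_assoc, mul_left_comm] using
    (((hasDerivAt_id t).const_mul γ).exp).const_mul c

lemma hasDerivAt_exp_mul_sub_mul_exp (p c γ t : ℝ) :
    HasDerivAt (fun t => exp (p * t - c * exp (γ * t)))
      (p * exp (p * t - c * exp (γ * t)) - c * γ * exp ((γ + p) * t - c * exp (γ * t))) t := by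
  have hlin : HasDerivAt (fun t => p * t) p t := by simpa using (hasDerivAt_id t).const_mul p
  refine (hlin.fun_sub (hasDerivAt_mul_exp_mul c γ t)).exp.congr_deriv ?_
  rw [add_mul, add_sub_assoc, exp_add]
  ring

section Substitution

variable {c γ : ℝ}

lemma image_mul_exp_mul_Ioi_zero (hc : 0 < c) (hγ : 0 < γ) :
    (fun t => c * exp (γ * t)) '' Ioi 0 = Ioi c := by
  have : (fun t => c * exp (γ * t)) = (c * ·) ∘ exp ∘ (γ * ·) := rfl
  rw [this, image_comp, image_comp, image_const_mul_Ioi_zero hγ, image_exp_Ioi,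
    image_mul_left_Ioi hc, exp_zero, mul_one]

lemma injOn_mul_exp_mul (hc : 0 < c) (hγ : 0 < γ) : InjOn (fun t => c * exp (γ * t)) (Ioi 0) :=
  (StrictMono.const_mul (exp_strictMono.comp (strictMono_mul_left_of_pos hγ)) hc).injective.injOn

lemma abs_deriv_mul_rpow_mul_exp_neg (hc : 0 < c) (hγ : 0 < γ) (q t : ℝ) :
    |c * γ * exp (γ * t)| * ((c * exp (γ * t)) ^ (q - 1) * exp (-(c * exp (γ * t))))
      = γ * c ^ q * exp (γ * q * t - c * exp (γ * t)) := by
  have hu : 0 < c * exp (γ * t) := by positivity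
  rw [abs_of_pos (by positivity), rpow_sub_one hu.ne', mul_rpow hc.le (exp_pos _).le,
    ← exp_mul, sub_eq_add_neg, exp_add]
  field_simp

theorem integral_rpow_mul_exp_neg_Ioi_eq (hc : 0 < c) (hγ : 0 < γ) (q : ℝ) :
    ∫ y in Ioi c, y ^ (q - 1) * exp (-y)
      = γ * c ^ q * ∫ t in Ioi 0, exp (γ * q * t - c * exp (γ * t)) := by
  rw [← image_mul_exp_mul_Ioi_zero hc hγ, integral_image_eq_integral_abs_deriv_smul
    measurableSet_Ioi (fun t _ => (hasDerivAt_mul_exp_mul c γ t).hasDerivWithinAt)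
    (injOn_mul_exp_mul hc hγ), ← integral_const_mul]
  exact setIntegral_congr_fun measurableSet_Ioi fun t _ => abs_deriv_mul_rpow_mul_exp_neg hc hγ q t

theorem integrableOn_exp_mul_sub_mul_exp_iff (hc : 0 < c) (hγ : 0 < γ) (q : ℝ) :
    IntegrableOn (fun t => exp (γ * q * t - c * exp (γ * t))) (Ioi 0)
      ↔ IntegrableOn (fun y => y ^ (q - 1) * exp (-y)) (Ioi c) := by
  rw [← image_mul_exp_mul_Ioi_zero hc hγ, integrableOn_image_iff_integrableOn_abs_deriv_smul
    measurableSet_Ioi (fun t _ => (hasDerivAt_mul_exp_mul c γ t).hasDerivWithinAt)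
    (injOn_mul_exp_mul hc hγ)]
  simp only [smul_eq_mul]
  rw [integrableOn_congr_fun (fun t _ => abs_deriv_mul_rpow_mul_exp_neg hc hγ q t) measurableSet_Ioi]
  exact (integrable_const_mul_iff (IsUnit.mk0 _ (by positivity)) _).symm

end Substitution

section Recurrence

variable {s c γ : ℝ}

lemma tendsto_exp_neg_mul_sub_mul_exp (hs : 0 < s) (hc : 0 ≤ c) :
    Tendsto (fun t => exp (-s * t - c * exp (γ * t))) atTop (𝓝 0) := by
  refine tendsto_exp_atBot.comp (tendsto_atBot_mono (fun t => ?_)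
    (tendsto_neg_atTop_atBot.comp (tendsto_id.const_mul_atTop hs)))
  have : 0 ≤ c * exp (γ * t) := by positivity
  simp only [Function.comp, id]
  linarith

lemma integrableOn_exp_neg_mul_sub_mul_exp (hs : 0 < s) (hc : 0 ≤ c) :
    IntegrableOn (fun t => exp (-s * t - c * exp (γ * t))) (Ioi 0) := by
  refine (exp_neg_integrableOn_Ioi 0 hs).mono' (by fun_prop) (ae_of_all _ fun t => ?_)
  rw [norm_of_nonneg (exp_pos _).le, exp_le_exp, sub_le_self_iff]
  positivity

theorem mul_integral_exp_neg_mul_sub_mul_exp (hs : 0 < s) (hc : 0 ≤ c)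
    (hint : IntegrableOn (fun t => exp ((γ - s) * t - c * exp (γ * t))) (Ioi 0)) :
    s * ∫ t in Ioi 0, exp (-s * t - c * exp (γ * t))
      = exp (-c) - c * γ * ∫ t in Ioi 0, exp ((γ - s) * t - c * exp (γ * t)) := by
  have hint₁ := (integrableOn_exp_neg_mul_sub_mul_exp (γ := γ) hs hc).const_mul (-s)
  have hint₂ := hint.const_mul (c * γ)
  have hftc := integral_Ioi_of_hasDerivAt_of_tendsto' (a := 0)
    (fun t _ => hasDerivAt_exp_mul_sub_mul_exp (-s) c γ t) (hint₁.sub hint₂)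
    (tendsto_exp_neg_mul_sub_mul_exp hs hc)
  rw [← sub_eq_add_neg, integral_sub hint₁ hint₂, integral_const_mul, integral_const_mul] at hftc
  simp only [mul_zero, zero_sub, exp_zero, mul_one] at hftc
  linarith

end Recurrence

lemma Gamma_mul_one_sub_gammaCDF' {η c : ℝ} (hη : 0 < η) (hc : 0 ≤ c) :
    Gamma η * (1 - gammaCDF' c η) = ∫ y in Ioi c, y ^ (η - 1) * exp (-y) := by
  have hint : IntegrableOn (fun y => y ^ (η - 1) * exp (-y)) (Ioi 0) := by
    simpa only [mul_comm] using GammaIntegral_convergent hη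
  have hsplit := setIntegral_union (Ioc_disjoint_Ioi le_rfl) measurableSet_Ioi
    (hint.mono_set Ioc_subset_Ioi_self) (hint.mono_set (Ioi_subset_Ioi hc))
  rw [Ioc_union_Ioi_eq_Ioi hc] at hsplit
  rw [gammaCDF', intervalIntegral.integral_of_le hc, mul_sub, mul_one, ← mul_assoc,
    mul_one_div_cancel (Gamma_pos_of_pos hη).ne', one_mul, Gamma_eq_integral hη]
  simp only [mul_comm (exp _)]
  linarith

theorem mul_integral_exp_neg_mul_sub_mul_exp_eq_Gamma {s c γ : ℝ} (hc : 0 < c) (hγ : 0 < γ)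
    (hs : 0 < s) (hsγ : s < γ) :
    s * ∫ t in Ioi 0, exp (-s * t - c * exp (γ * t))
      = exp (-c) - c ^ (s / γ) * Gamma (1 - s / γ) * (1 - gammaCDF' c (1 - s / γ)) := by
  set η := 1 - s / γ
  have hη : 0 < η := sub_pos.mpr ((div_lt_one hγ).mpr hsγ)
  have hγη : γ * η = γ - s := by rw [mul_sub, mul_one, mul_div_cancel₀ _ hγ.ne']
  have hsubst := integral_rpow_mul_exp_neg_Ioi_eq hc hγ η
  have hint := (integrableOn_exp_mul_sub_mul_exp_iff hc hγ η).mpr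
    ((GammaIntegral_convergent hη).mono_set (Ioi_subset_Ioi hc.le) |>.congr_fun
      (fun y _ => mul_comm _ _) measurableSet_Ioi)
  rw [hγη] at hsubst hint
  have hpow : c ^ (s / γ) * c ^ η = c := by
    rw [← rpow_add hc, add_sub_cancel, rpow_one]
  rw [mul_integral_exp_neg_mul_sub_mul_exp hs hc.le hint, mul_assoc (c ^ (s / γ)),
    Gamma_mul_one_sub_gammaCDF' hη hc.le, hsubst]
  linear_combination (γ * ∫ t in Ioi 0, exp ((γ - s) * t - c * exp (γ * t))) * hpow

theorem annuity_eq_gamma_expression_general (α β γ δ x : ℝ)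
    (hβ : 0 < β) (hγ : 0 < γ)
    (hαδ : 0 < α + δ) (hαδγ : α + δ < γ) :
    annuity α β γ δ x =
      (1 / (α + δ)) *
        (1 - (β * Real.exp (γ * x) / γ) ^ ((α + δ) / γ) *
          Real.exp (β * Real.exp (γ * x) / γ) * Real.Gamma (1 - (α + δ) / γ) *
          (1 - gammaCDF' (β * Real.exp (γ * x) / γ) (1 - (α + δ) / γ))) := by
  have hc : 0 < β * exp (γ * x) / γ := by positivity
  have key := mul_integral_exp_neg_mul_sub_mul_exp_eq_Gamma hc hγ hαδ hαδγ
  have hexp : exp (β * exp (γ * x) / γ) * exp (-(β * exp (γ * x) / γ)) = 1 := by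
    rw [← exp_add, add_neg_cancel, exp_zero]
  rw [annuity_eq_exp_mul_integral, eq_comm, one_div_mul_eq_div, div_eq_iff hαδ.ne']
  linear_combination (-exp (β * exp (γ * x) / γ)) * key - hexp

theorem annuity_eq_gamma_expression (α β γ δ x : ℝ)
    (hβ : 0 < β) (hγ : 0 < γ) (hα : 0 ≤ α) (hδ : 0 ≤ δ)
    (hαδ : 0 < α + δ) (hαδγ : α + δ < γ) (hx : 0 ≤ x) :
    annuity α β γ δ x =
      (1 / (α + δ)) *
        (1 - (β * Real.exp (γ * x) / γ) ^ ((α + δ) / γ) *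
          Real.exp (β * Real.exp (γ * x) / γ) * Real.Gamma (1 - (α + δ) / γ) *
          (1 - gammaCDF' (β * Real.exp (γ * x) / γ) (1 - (α + δ) / γ))) :=
  annuity_eq_gamma_expression_general α β γ δ x hβ hγ hαδ hαδγ
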